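/- Let u be an infinite word over a finite alphabet A with letter frequencies f = (f_i). Then u is balanced if and only if its discrepancy Δ(u) = limsup over i ∈ A and n ∈ ℕ of ||u_0⋯u_{n-1}|_i − n f_i| is finite. Moreover, quantitatively, Δ(u) ≤ B(u) and B(u) ≤ 4Δ(u) when both are finite, where B(u) is the least C such that u is C-balanced. -/

import Mathlib

/-!
Write `c n` for the number of occurrences of a letter `i` in the prefix of length `n`.
If `u` is `C`-balanced, cutting the prefix of length `k n` into `k` blocks of length `n`,
each within `C` of the first one, gives `|c (k n) - k c n| ≤ k C`; dividing by `k` and letting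
`k → ∞` yields `|c n - n f_i| ≤ C`. Conversely, a factor of length `n` starting at `k` counts
`c (k + n) - c k`, which is within `2 Δ` of `n f_i`, so two factors of equal length differ by
at most `4 Δ`.
-/

open Filter Topology ENNReal

/-- The factor of the infinite word `u` of length `n` starting at position `k`. -/
def factorAt {A : Type*} (u : ℕ → A) (k n : ℕ) : List A :=
  (List.range n).map (fun j => u (k + j))

/-- `w` is a factor of the infinite word `u`. -/
def IsFactor {A : Type*} (u : ℕ → A) (w : List A) : Prop :=
  ∃ k, w = factorAt u k w.length

/-- The discrepancy `Δ(u)` of the word `u` with respect to the letter frequency vector `f`: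
the supremum over letters `i` and `n ∈ ℕ` of `||u_0⋯u_{n-1}|_i − n f_i|` (in `ℝ≥0∞`). -/
noncomputable def discrepancy {A : Type*} [Fintype A] [DecidableEq A]
    (u : ℕ → A) (f : A → ℝ) : ℝ≥0∞ :=
  ⨆ i : A, ⨆ n : ℕ, ENNReal.ofReal |((factorAt u 0 n).count i : ℝ) - n * f i|

/-- The balancedness constant `B(u)`: the least `C ∈ ℝ≥0∞` such that `u` is `C`-balanced. -/
noncomputable def balanceConst {A : Type*} [Fintype A] [DecidableEq A]
    (u : ℕ → A) : ℝ≥0∞ :=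
  sInf {C : ℝ≥0∞ | ∀ v w : List A, IsFactor u v → IsFactor u w → v.length = w.length →
    ∀ i : A, ENNReal.ofReal |(v.count i : ℝ) - (w.count i : ℝ)| ≤ C}

theorem abs_sub_mul_le_of_tendsto_div {a : ℕ → ℝ} {L C : ℝ} {n : ℕ} (hn : 0 < n)
    (ha : Tendsto (fun m => a m / m) atTop (𝓝 L))
    (hC : ∀ k : ℕ, |a (k * n) - k * a n| ≤ k * C) : |a n - n * L| ≤ C := by
  have hlim : Tendsto (fun k : ℕ => a (k * n) / k) atTop (𝓝 (n * L)) := by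
    refine ((ha.comp (tendsto_id.nsmul_atTop hn)).const_mul (n : ℝ)).congr fun k => ?_
    simp only [Function.comp_apply, id, smul_eq_mul, Nat.cast_mul]
    rcases eq_or_ne (k : ℝ) 0 with hk | hk
    · simp [hk]
    · field_simp
      rw [Nat.mul_comm]
  have hbound : ∀ᶠ k : ℕ in atTop, |a (k * n) / k - a n| ≤ C := by
    filter_upwards [eventually_gt_atTop 0] with k hk
    have hkR : (0 : ℝ) < k := by positivity
    rw [div_sub' hkR.ne', abs_div, abs_of_pos hkR, div_le_iff₀ hkR, mul_comm C]
    exact hC k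
  rw [abs_sub_comm]
  exact le_of_tendsto (hlim.sub_const (a n)).abs hbound

section Words

variable {A : Type*} (u : ℕ → A)

theorem length_factorAt (k n : ℕ) : (factorAt u k n).length = n := by
  simp [factorAt]

theorem isFactor_factorAt (k n : ℕ) : IsFactor u (factorAt u k n) :=
  ⟨k, by rw [length_factorAt]⟩

theorem factorAt_zero_add (k n : ℕ) :
    factorAt u 0 (k + n) = factorAt u 0 k ++ factorAt u k n := by
  simp [factorAt, List.range_add, Function.comp_def]

variable [DecidableEq A]

theorem count_factorAt (k n : ℕ) (i : A) :
    ((factorAt u k n).count i : ℝ)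
      = (factorAt u 0 (k + n)).count i - (factorAt u 0 k).count i := by
  rw [factorAt_zero_add u k n, List.count_append]
  push_cast
  ring

def IsBalancedBy (C : ℝ) : Prop :=
  ∀ v w : List A, IsFactor u v → IsFactor u w → v.length = w.length →
    ∀ i : A, |(v.count i : ℝ) - (w.count i : ℝ)| ≤ C

variable {u}

theorem IsBalancedBy.nonneg {C : ℝ} (h : IsBalancedBy u C) : 0 ≤ C := by
  simpa using h _ _ (isFactor_factorAt u 0 0) (isFactor_factorAt u 0 0) rfl (u 0)

theorem IsBalancedBy.abs_count_mul_sub_le {C : ℝ} (h : IsBalancedBy u C) (i : A) (n k : ℕ) :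
    |((factorAt u 0 (k * n)).count i : ℝ) - k * (factorAt u 0 n).count i| ≤ k * C := by
  induction k with
  | zero => simp [factorAt]
  | succ k ih =>
    have hblock : |((factorAt u (k * n) n).count i : ℝ) - (factorAt u 0 n).count i| ≤ C :=
      h _ _ (isFactor_factorAt u _ n) (isFactor_factorAt u 0 n)
        (by rw [length_factorAt, length_factorAt]) i
    rw [count_factorAt, ← Nat.succ_mul] at hblock
    push_cast
    calc _ = |(((factorAt u 0 (k * n)).count i : ℝ) - k * (factorAt u 0 n).count i)
            + (((factorAt u 0 ((k + 1) * n)).count i : ℝ) - (factorAt u 0 (k * n)).count i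
              - (factorAt u 0 n).count i)| := by ring_nf
      _ ≤ k * C + C := (abs_add_le _ _).trans (add_le_add ih hblock)
      _ = (k + 1) * C := by ring

theorem IsBalancedBy.abs_count_sub_mul_le {f : A → ℝ} {C : ℝ} (h : IsBalancedBy u C) (i : A)
    (hfreq : Tendsto (fun n => ((factorAt u 0 n).count i : ℝ) / n) atTop (𝓝 (f i))) (n : ℕ) :
    |((factorAt u 0 n).count i : ℝ) - n * f i| ≤ C := by
  rcases Nat.eq_zero_or_pos n with rfl | hn
  · simpa [factorAt] using h.nonneg
  · exact abs_sub_mul_le_of_tendsto_div hn hfreq (h.abs_count_mul_sub_le i n)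

theorem abs_count_factorAt_sub_mul_le {f : A → ℝ} {D : ℝ}
    (hD : ∀ i : A, ∀ n : ℕ, |((factorAt u 0 n).count i : ℝ) - n * f i| ≤ D) (k n : ℕ) (i : A) :
    |((factorAt u k n).count i : ℝ) - n * f i| ≤ 2 * D := by
  have hsplit : ((factorAt u k n).count i : ℝ) - n * f i
      = (((factorAt u 0 (k + n)).count i : ℝ) - (k + n : ℕ) * f i)
        - (((factorAt u 0 k).count i : ℝ) - k * f i) := by
    rw [count_factorAt]; push_cast; ring
  rw [hsplit, two_mul]
  exact (abs_sub _ _).trans (add_le_add (hD i _) (hD i k))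

theorem isBalancedBy_of_abs_count_sub_mul_le {f : A → ℝ} {D : ℝ}
    (hD : ∀ i : A, ∀ n : ℕ, |((factorAt u 0 n).count i : ℝ) - n * f i| ≤ D) :
    IsBalancedBy u (4 * D) := by
  rintro v w ⟨k, hv⟩ ⟨l, hw⟩ hlen i
  have hv' := abs_count_factorAt_sub_mul_le hD k v.length i
  have hw' := abs_count_factorAt_sub_mul_le hD l w.length i
  rw [← hv, hlen] at hv'
  rw [← hw] at hw'
  calc _ = |((v.count i : ℝ) - w.length * f i) - ((w.count i : ℝ) - w.length * f i)| := by
          ring_nf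
    _ ≤ 2 * D + 2 * D := (abs_sub _ _).trans (add_le_add hv' hw')
    _ = 4 * D := by ring

end Words

section Constants

variable {A : Type*} [Fintype A] [DecidableEq A] {u : ℕ → A} {f : A → ℝ}

theorem discrepancy_le_ofReal {D : ℝ}
    (hD : ∀ i : A, ∀ n : ℕ, |((factorAt u 0 n).count i : ℝ) - n * f i| ≤ D) :
    discrepancy u f ≤ ENNReal.ofReal D :=
  iSup₂_le fun i n => ENNReal.ofReal_le_ofReal (hD i n)

theorem abs_count_sub_mul_le_toReal_discrepancy (hΔ : discrepancy u f ≠ ⊤) (i : A) (n : ℕ) :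
    |((factorAt u 0 n).count i : ℝ) - n * f i| ≤ (discrepancy u f).toReal :=
  (ENNReal.ofReal_le_iff_le_toReal hΔ).mp <|
    le_iSup₂ (f := fun i n => ENNReal.ofReal |((factorAt u 0 n).count i : ℝ) - n * f i|) i n

theorem balanceConst_le_ofReal {C : ℝ} (h : IsBalancedBy u C) :
    balanceConst u ≤ ENNReal.ofReal C :=
  sInf_le fun v w hv hw hlen i => ENNReal.ofReal_le_ofReal (h v w hv hw hlen i)

theorem discrepancy_le_balanceConst
    (hfreq : ∀ i : A,
      Tendsto (fun n => ((factorAt u 0 n).count i : ℝ) / n) atTop (𝓝 (f i))) :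
    discrepancy u f ≤ balanceConst u := by
  refine le_sInf fun C hC => ?_
  rcases eq_or_ne C ⊤ with rfl | hCtop
  · exact le_top
  have hbal : IsBalancedBy u C.toReal := fun v w hv hw hlen i =>
    (ENNReal.ofReal_le_iff_le_toReal hCtop).mp (hC v w hv hw hlen i)
  calc discrepancy u f ≤ ENNReal.ofReal C.toReal :=
        discrepancy_le_ofReal fun i => hbal.abs_count_sub_mul_le i (hfreq i)
    _ = C := ENNReal.ofReal_toReal hCtop

theorem balanceConst_le_four_mul_discrepancy : balanceConst u ≤ 4 * discrepancy u f := by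
  rcases eq_or_ne (discrepancy u f) ⊤ with hΔ | hΔ
  · simp [hΔ]
  calc balanceConst u ≤ ENNReal.ofReal (4 * (discrepancy u f).toReal) :=
        balanceConst_le_ofReal <| isBalancedBy_of_abs_count_sub_mul_le <|
          abs_count_sub_mul_le_toReal_discrepancy hΔ
    _ = 4 * discrepancy u f := by
        rw [ENNReal.ofReal_mul zero_le_four, ENNReal.ofReal_toReal hΔ, ENNReal.ofReal_ofNat]

end Constants

/-- For an infinite word `u` with letter frequencies `f`: `u` is balanced iff its
discrepancy `Δ(u)` is finite; moreover `Δ(u) ≤ B(u)` and `B(u) ≤ 4 Δ(u)`. -/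
theorem balanced_iff_finite_discrepancy {A : Type*} [Fintype A] [DecidableEq A]
    (u : ℕ → A) (f : A → ℝ)
    (hfreq : ∀ i : A,
      Tendsto (fun n => ((factorAt u 0 n).count i : ℝ) / n) atTop (𝓝 (f i))) :
    ((∃ C : ℝ, ∀ v w : List A, IsFactor u v → IsFactor u w → v.length = w.length →
        ∀ i : A, |(v.count i : ℝ) - (w.count i : ℝ)| ≤ C) ↔
      discrepancy u f ≠ ⊤) ∧
    discrepancy u f ≤ balanceConst u ∧
    balanceConst u ≤ 4 * discrepancy u f := by
  refine ⟨⟨?_, ?_⟩, discrepancy_le_balanceConst hfreq, balanceConst_le_four_mul_discrepancy⟩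
  · rintro ⟨C, hC⟩
    exact ne_top_of_le_ne_top ofReal_ne_top <|
      discrepancy_le_ofReal fun i => IsBalancedBy.abs_count_sub_mul_le hC i (hfreq i)
  · intro hΔ
    exact ⟨_, isBalancedBy_of_abs_count_sub_mul_le (abs_count_sub_mul_le_toReal_discrepancy hΔ)⟩
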